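/- arXiv:1206.1274 — 6 statements merged into one kernel-verified Lean document; each statement's English description precedes it below -/
import Mathlib

section
/- Let ã = ε⁻²·sin²θ·B and b̃ = −2ε⁻¹·B with B = 1 + (ε²−1)cos²θ, ε > 0, θ ∈ (0, π/2). Then the two roots α₁,₂ = √((b̃² − 2ã ± √(b̃⁴ − 4ãb̃²))/2) of the characteristic equation x⁴ − (b̃² − 2ã)x² + ã² = 0 are given explicitly by α₁ = (B + ε√B·cosθ)/ε and α₂ = (B − ε√B·cosθ)/ε. -/
/-! With `u = B / ε` and `v = √B cos θ` one has `ã = u² - v²` and `b̃ = -2u`, because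
`B = sin² θ + ε² cos² θ`. The quartic is then `(x² - (u + v)²)(x² - (u - v)²)`: its
discriminant in `x²` is `(4uv)²`, and the two roots in `x²` are `(u ± v)²`. Since
`cos θ ≥ 0` and `ε cos θ ≤ √B`, we have `0 ≤ v ≤ u`, so the outer square roots are `u ± v`. -/

open Real

theorem sqrt_biquadratic_roots {u v : ℝ} (a b : ℝ) (hv : 0 ≤ v) (hvu : v ≤ u)
    (ha : a = u ^ 2 - v ^ 2) (hb : b ^ 2 = (2 * u) ^ 2) :
    √((b ^ 2 - 2 * a + √(b ^ 4 - 4 * a * b ^ 2)) / 2) = u + v ∧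
    √((b ^ 2 - 2 * a - √(b ^ 4 - 4 * a * b ^ 2)) / 2) = u - v := by
  have hdisc : √(b ^ 4 - 4 * a * b ^ 2) = 4 * u * v := by
    rw [← sqrt_sq (by nlinarith : 0 ≤ 4 * u * v)]
    congr 1
    rw [ha, show b ^ 4 = (b ^ 2) ^ 2 by ring, hb]
    ring
  rw [hdisc, hb, ha]
  constructor
  · rw [← sqrt_sq (by linarith : 0 ≤ u + v)]
    congr 1
    ring
  · rw [← sqrt_sq (by linarith : 0 ≤ u - v)]
    congr 1
    ring

theorem one_add_sq_sub_one_mul_cos_sq (ε θ : ℝ) :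
    1 + (ε ^ 2 - 1) * cos θ ^ 2 = sin θ ^ 2 + ε ^ 2 * cos θ ^ 2 := by
  linear_combination -sin_sq_add_cos_sq θ

theorem alpha_explicit (ε θ B a b : ℝ) (hε : 0 < ε) (hθ : θ ∈ Set.Ioo 0 (π / 2))
    (hB : B = 1 + (ε ^ 2 - 1) * cos θ ^ 2)
    (ha : a = ε⁻¹ ^ 2 * sin θ ^ 2 * B) (hb : b = -2 * ε⁻¹ * B) :
    Real.sqrt ((b ^ 2 - 2 * a + Real.sqrt (b ^ 4 - 4 * a * b ^ 2)) / 2)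
        = (B + ε * Real.sqrt B * cos θ) / ε ∧
    Real.sqrt ((b ^ 2 - 2 * a - Real.sqrt (b ^ 4 - 4 * a * b ^ 2)) / 2)
        = (B - ε * Real.sqrt B * cos θ) / ε := by
  rw [one_add_sq_sub_one_mul_cos_sq] at hB
  have hcos : 0 ≤ cos θ := cos_nonneg_of_mem_Icc ⟨by linarith [hθ.1, pi_pos], hθ.2.le⟩
  have hsqB : √B ^ 2 = B := sq_sqrt (by rw [hB]; positivity)
  have hεcos : ε * cos θ ≤ √B :=
    le_sqrt_of_sq_le (by rw [hB]; nlinarith [sq_nonneg (sin θ)])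
  have hvu : √B * cos θ ≤ B / ε := by
    rw [le_div_iff₀ hε]
    nlinarith [mul_le_mul_of_nonneg_left hεcos (sqrt_nonneg B)]
  have ha' : a = (B / ε) ^ 2 - (√B * cos θ) ^ 2 := by
    rw [ha]
    field_simp
    linear_combination (ε ^ 2 * cos θ ^ 2) * hsqB - B * hB
  have hb' : b ^ 2 = (2 * (B / ε)) ^ 2 := by rw [hb]; ring
  convert sqrt_biquadratic_roots a b (mul_nonneg (sqrt_nonneg B) hcos) hvu ha' hb' using 1 <;>
    field_simp
end

section
/- The slope m = α₂/α₁ = (√B − ε·cosθ)/(√B + ε·cosθ), with B = 1 + (ε²−1)cos²θ and ε > 0 fixed, is a strictly increasing continuous function of θ ∈ (0, π/2) taking all values in the open interval (0, 1). -/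
/-!
In terms of `c = cos θ` the slope is `(S - ε c) / (S + ε c)` with `S = √(1 + (ε² - 1) c²)`.
The ratio `c / S` is strictly increasing on `[0, 1]` (squared and cross-multiplied, the
comparison reduces to `c² < d²`), so the slope strictly decreases in `c` and strictly increases
in `θ ∈ [0, π/2]`. It is continuous there, equal to `0` at `θ = 0` and to `1` at `θ = π/2`,
so by the intermediate value theorem it maps `(0, π/2)` onto `(0, 1)`.
-/

open Real Set

theorem mul_sqrt_lt_mul_sqrt {k c d : ℝ} (hc : 0 ≤ c) (hcd : c < d)
    (hkc : 0 ≤ 1 + k * c ^ 2) (hkd : 0 ≤ 1 + k * d ^ 2) :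
    c * √(1 + k * d ^ 2) < d * √(1 + k * c ^ 2) := by
  have hsq : (c * √(1 + k * d ^ 2)) ^ 2 < (d * √(1 + k * c ^ 2)) ^ 2 := by
    rw [mul_pow, mul_pow, sq_sqrt hkc, sq_sqrt hkd]
    nlinarith
  exact lt_of_pow_lt_pow_left₀ 2 (mul_nonneg (hc.trans hcd.le) (sqrt_nonneg _)) hsq

theorem sub_div_add_lt_sub_div_add {a b x y : ℝ} (hax : 0 < a + x) (hby : 0 < b + y)
    (h : a * y < b * x) : (a - x) / (a + x) < (b - y) / (b + y) := by
  rw [div_lt_div_iff₀ hax hby]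
  linarith

noncomputable def slopeOfCos (ε c : ℝ) : ℝ :=
  (√(1 + (ε ^ 2 - 1) * c ^ 2) - ε * c) / (√(1 + (ε ^ 2 - 1) * c ^ 2) + ε * c)

section SlopeOfCos

variable {ε : ℝ}

theorem one_add_sq_sub_one_mul_sq_pos (hε : 0 < ε) {c : ℝ} (hc : c ^ 2 ≤ 1) :
    0 < 1 + (ε ^ 2 - 1) * c ^ 2 := by
  rcases hc.lt_or_eq with hc | hc
  · nlinarith [mul_nonneg (sq_nonneg ε) (sq_nonneg c)]
  · rw [hc]
    nlinarith

theorem slopeOfCos_denominator_pos (hε : 0 < ε) {c : ℝ} (hc : c ∈ Icc (0 : ℝ) 1) :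
    0 < √(1 + (ε ^ 2 - 1) * c ^ 2) + ε * c := by
  have hS := sqrt_pos.2 (one_add_sq_sub_one_mul_sq_pos hε (pow_le_one₀ hc.1 hc.2))
  nlinarith [hc.1]

theorem slopeOfCos_zero : slopeOfCos ε 0 = 1 := by
  simp [slopeOfCos]

theorem slopeOfCos_one (hε : 0 ≤ ε) : slopeOfCos ε 1 = 0 := by
  simp [slopeOfCos, sqrt_sq hε]

theorem strictAntiOn_slopeOfCos (hε : 0 < ε) : StrictAntiOn (slopeOfCos ε) (Icc 0 1) := by
  intro c hc d hd hcd
  have hpos {x : ℝ} (hx : x ∈ Icc (0 : ℝ) 1) :=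
    one_add_sq_sub_one_mul_sq_pos hε (pow_le_one₀ hx.1 hx.2)
  have key := mul_lt_mul_of_pos_left
    (mul_sqrt_lt_mul_sqrt hc.1 hcd (hpos hc).le (hpos hd).le) hε
  refine sub_div_add_lt_sub_div_add (slopeOfCos_denominator_pos hε hd) (slopeOfCos_denominator_pos hε hc) ?_
  linarith

theorem continuousOn_slopeOfCos (hε : 0 < ε) : ContinuousOn (slopeOfCos ε) (Icc 0 1) :=
  ContinuousOn.div (by fun_prop) (by fun_prop) fun c hc ↦ (slopeOfCos_denominator_pos hε hc).ne'

end SlopeOfCos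

theorem mapsTo_cos_Icc_zero_pi_div_two : MapsTo cos (Icc 0 (π / 2)) (Icc 0 1) :=
  fun θ hθ ↦ ⟨cos_nonneg_of_mem_Icc ⟨by linarith [hθ.1, pi_pos], hθ.2⟩, cos_le_one θ⟩

theorem slope_properties (ε : ℝ) (hε : 0 < ε) (B m : ℝ → ℝ)
    (hB : ∀ θ, B θ = 1 + (ε ^ 2 - 1) * cos θ ^ 2)
    (hm : ∀ θ, m θ = (Real.sqrt (B θ) - ε * cos θ) / (Real.sqrt (B θ) + ε * cos θ)) :
    StrictMonoOn m (Set.Ioo 0 (π / 2)) ∧ ContinuousOn m (Set.Ioo 0 (π / 2)) ∧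
      m '' Set.Ioo 0 (π / 2) = Set.Ioo 0 1 := by
  have hm_eq : m = slopeOfCos ε ∘ cos := funext fun θ ↦ by rw [hm, hB]; rfl
  have hmono : StrictMonoOn m (Icc 0 (π / 2)) := hm_eq ▸ (strictAntiOn_slopeOfCos hε).comp
    (strictAntiOn_cos.mono (Icc_subset_Icc_right (by linarith [pi_pos])))
    mapsTo_cos_Icc_zero_pi_div_two
  have hcont : ContinuousOn m (Icc 0 (π / 2)) := hm_eq ▸
    (continuousOn_slopeOfCos hε).comp continuous_cos.continuousOn mapsTo_cos_Icc_zero_pi_div_two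
  refine ⟨hmono.mono Ioo_subset_Icc_self, hcont.mono Ioo_subset_Icc_self, ?_⟩
  rw [hcont.image_Ioo_of_strictMonoOn (by positivity) hmono, hm_eq]
  simp [slopeOfCos_zero, slopeOfCos_one hε.le]
end

section
/- With c₁ = 1/2 − ε·cosθ/(2√B), c₂ = 1/2 + ε·cosθ/(2√B), α₁ = 2Bc₂/ε, α₂ = 2Bc₁/ε, B = 1 + (ε²−1)cos²θ, ε > 0, θ ∈ (0, π/2), the geodesic β(u) = (√c₁·cos(α₁u), √c₁·sin(α₁u), √c₂·cos(α₂u), √c₂·sin(α₂u)) satisfies the fourth-order ODE β⁗(u) + (b̃² − 2ã)·β''(u) + ã²·β(u) = 0, where ã = ε⁻²sin²θ·B and b̃ = −2ε⁻¹B. -/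
/-!
Each component of `β` is `C * cos (α t)` or `C * sin (α t)` with `α ∈ {α₁, α₂}`, so its even
derivatives are `(-α²)ᵏ` times itself and the ODE reduces to the characteristic equation
`α⁴ - (b̃² - 2ã) α² + ã² = 0`. Since `α₁ + α₂ = -b̃` (as `c₁ + c₂ = 1`) and `α₁ α₂ = ã`
(as `c₁ c₂ = sin² θ / (4B)`), its left side factors as `(α² - α₁²)(α² - α₂²)`.
-/

open Real

theorem iteratedDeriv_two_mul_const_mul_cos_mul (C α : ℝ) (n : ℕ) :
    iteratedDeriv (2 * n) (fun t => C * cos (α * t)) =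
      fun t => (-α ^ 2) ^ n * (C * cos (α * t)) := by
  funext t
  rw [iteratedDeriv_const_mul_field, iteratedDeriv_comp_const_mul contDiff_cos,
    iteratedDeriv_even_cos, pow_mul, neg_pow (α ^ 2)]
  simp only [Pi.mul_apply, Pi.pow_apply, Pi.neg_apply, Pi.one_apply]
  ring

theorem iteratedDeriv_two_mul_const_mul_sin_mul (C α : ℝ) (n : ℕ) :
    iteratedDeriv (2 * n) (fun t => C * sin (α * t)) =
      fun t => (-α ^ 2) ^ n * (C * sin (α * t)) := by
  funext t
  rw [iteratedDeriv_const_mul_field, iteratedDeriv_comp_const_mul contDiff_sin,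
    iteratedDeriv_even_sin, pow_mul, neg_pow (α ^ 2)]
  simp only [Pi.mul_apply, Pi.pow_apply, Pi.neg_apply, Pi.one_apply]
  ring

theorem iteratedDeriv_four_add_eq_zero_of_iteratedDeriv_two_mul {f : ℝ → ℝ} {α s p : ℝ}
    (hf : ∀ n, iteratedDeriv (2 * n) f = fun t => (-α ^ 2) ^ n * f t)
    (hα : α ^ 4 - s * α ^ 2 + p = 0) (u : ℝ) :
    iteratedDeriv 4 f u + s * iteratedDeriv 2 f u + p * f u = 0 := by
  rw [show 4 = 2 * 2 from rfl, hf 2, show 2 = 2 * 1 from rfl, hf 1]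
  linear_combination f u * hα

theorem one_add_sq_sub_one_mul_cos_sq_pos {ε : ℝ} (hε : ε ≠ 0) (θ : ℝ) :
    0 < 1 + (ε ^ 2 - 1) * cos θ ^ 2 := by
  have hε₂ : 0 < ε ^ 2 := by positivity
  nlinarith [sin_sq_add_cos_sq θ, sq_nonneg (sin θ), sq_nonneg (cos θ),
    mul_nonneg hε₂.le (sq_nonneg (cos θ))]

theorem weights_mul_eq_sin_sq_div {ε θ B c₁ c₂ : ℝ} (hB₀ : 0 < B)
    (hB : B = 1 + (ε ^ 2 - 1) * cos θ ^ 2)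
    (hc₁ : c₁ = 1 / 2 - ε * cos θ / (2 * √B))
    (hc₂ : c₂ = 1 / 2 + ε * cos θ / (2 * √B)) :
    c₁ * c₂ = sin θ ^ 2 / (4 * B) := by
  calc c₁ * c₂ = (√B ^ 2 - (ε * cos θ) ^ 2) / (4 * √B ^ 2) := by
        rw [hc₁, hc₂]; field_simp; ring
    _ = (B - (ε * cos θ) ^ 2) / (4 * B) := by rw [sq_sqrt hB₀.le]
    _ = sin θ ^ 2 / (4 * B) := by
        congr 1; linear_combination hB - sin_sq_add_cos_sq θ

theorem beta_fourth_order_ode_general (ε θ B c₁ c₂ α₁ α₂ a b : ℝ) (hε : 0 < ε)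
    (hB : B = 1 + (ε ^ 2 - 1) * cos θ ^ 2)
    (hc₁ : c₁ = 1 / 2 - ε * cos θ / (2 * Real.sqrt B))
    (hc₂ : c₂ = 1 / 2 + ε * cos θ / (2 * Real.sqrt B))
    (hα₁ : α₁ = 2 * B * c₂ / ε) (hα₂ : α₂ = 2 * B * c₁ / ε)
    (ha : a = ε⁻¹ ^ 2 * sin θ ^ 2 * B) (hb : b = -2 * ε⁻¹ * B)
    (β : ℝ → Fin 4 → ℝ)
    (hβ : ∀ u, β u = ![Real.sqrt c₁ * cos (α₁ * u), Real.sqrt c₁ * sin (α₁ * u),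
      Real.sqrt c₂ * cos (α₂ * u), Real.sqrt c₂ * sin (α₂ * u)]) :
    ∀ (i : Fin 4) (u : ℝ),
      iteratedDeriv 4 (fun t => β t i) u + (b ^ 2 - 2 * a) * iteratedDeriv 2 (fun t => β t i) u
        + a ^ 2 * β u i = 0 := by
  have hB₀ : 0 < B := hB ▸ one_add_sq_sub_one_mul_cos_sq_pos hε.ne' θ
  have hsum : α₁ + α₂ = -b := by
    have hc : c₁ + c₂ = 1 := by rw [hc₁, hc₂]; ring
    rw [hα₁, hα₂, hb]
    field_simp
    linarith
  have hprod : α₁ * α₂ = a := by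
    calc α₁ * α₂ = 4 * B ^ 2 * (c₁ * c₂) / ε ^ 2 := by rw [hα₁, hα₂]; ring
      _ = a := by rw [weights_mul_eq_sin_sq_div hB₀ hB hc₁ hc₂, ha]; field_simp
  have hchar : ∀ α,
      α ^ 4 - (b ^ 2 - 2 * a) * α ^ 2 + a ^ 2 = (α ^ 2 - α₁ ^ 2) * (α ^ 2 - α₂ ^ 2) := by
    intro α
    rw [← hprod, show b = -(α₁ + α₂) by linarith]
    ring
  intro i u
  simp only [hβ]
  have ode := @iteratedDeriv_four_add_eq_zero_of_iteratedDeriv_two_mul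
  fin_cases i <;>
    simp only [Fin.zero_eta, Fin.mk_one, Fin.reduceFinMk, Fin.isValue, Matrix.cons_val_zero,
      Matrix.cons_val_one, Matrix.cons_val]
  · exact ode (iteratedDeriv_two_mul_const_mul_cos_mul _ _) ((hchar α₁).trans (by ring)) u
  · exact ode (iteratedDeriv_two_mul_const_mul_sin_mul _ _) ((hchar α₁).trans (by ring)) u
  · exact ode (iteratedDeriv_two_mul_const_mul_cos_mul _ _) ((hchar α₂).trans (by ring)) u
  · exact ode (iteratedDeriv_two_mul_const_mul_sin_mul _ _) ((hchar α₂).trans (by ring)) u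

theorem beta_fourth_order_ode (ε θ B c₁ c₂ α₁ α₂ a b : ℝ) (hε : 0 < ε)
    (hθ : θ ∈ Set.Ioo 0 (π / 2))
    (hB : B = 1 + (ε ^ 2 - 1) * cos θ ^ 2)
    (hc₁ : c₁ = 1 / 2 - ε * cos θ / (2 * Real.sqrt B))
    (hc₂ : c₂ = 1 / 2 + ε * cos θ / (2 * Real.sqrt B))
    (hα₁ : α₁ = 2 * B * c₂ / ε) (hα₂ : α₂ = 2 * B * c₁ / ε)
    (ha : a = ε⁻¹ ^ 2 * sin θ ^ 2 * B) (hb : b = -2 * ε⁻¹ * B)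
    (β : ℝ → Fin 4 → ℝ)
    (hβ : ∀ u, β u = ![Real.sqrt c₁ * cos (α₁ * u), Real.sqrt c₁ * sin (α₁ * u),
      Real.sqrt c₂ * cos (α₂ * u), Real.sqrt c₂ * sin (α₂ * u)]) :
    ∀ (i : Fin 4) (u : ℝ),
      iteratedDeriv 4 (fun t => β t i) u + (b ^ 2 - 2 * a) * iteratedDeriv 2 (fun t => β t i) u
        + a ^ 2 * β u i = 0 :=
  beta_fourth_order_ode_general ε θ B c₁ c₂ α₁ α₂ a b hε hB hc₁ hc₂ hα₁ hα₂ ha hb β hβ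
end

section
/- Conversely, every 4×4 orthogonal matrix A satisfying A·J₁ = J₁·A has the form: its rows are r, J₁r, cos ξ·J₂r + sin ξ·J₃r, −cos ξ·J₃r + sin ξ·J₂r for some unit vector r ∈ ℝ⁴ and some ξ ∈ ℝ, where J₁, J₂, J₃ are the standard anticommuting complex structures on ℝ⁴. -/
/-!
Identify `ℝ⁴` with the quaternions via the basis `1, i, j, k`: then `J₁`, `J₂`, `J₃` are left
multiplication by `i`, `k`, `j`, so `J₁ J₂ = -J₃` and `J₁ J₃ = J₂`, and for a unit vector `r` the
vectors `r, J₁ r, J₂ r, J₃ r` form an orthonormal basis (Euler's four-square identity).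
Commuting with `J₁` forces the second and fourth rows of `A` to be `J₁` applied to the first and
third. The third row is a unit vector orthogonal to `r` and `J₁ r`, hence `cos ξ • J₂ r + sin ξ • J₃ r`
for some `ξ`; applying `J₁` to it gives the fourth row.
-/

open Real Matrix

lemma Real.exists_cos_eq_and_sin_eq {x y : ℝ} (h : x ^ 2 + y ^ 2 = 1) :
    ∃ ξ : ℝ, cos ξ = x ∧ sin ξ = y := by
  have hz : ‖(⟨x, y⟩ : ℂ)‖ = 1 := by
    rw [Complex.norm_def, Complex.normSq_mk, ← sq, ← sq, h, sqrt_one]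
  exact ⟨Complex.arg ⟨x, y⟩, by simpa [hz] using Complex.norm_mul_cos_arg ⟨x, y⟩,
    by simpa [hz] using Complex.norm_mul_sin_arg ⟨x, y⟩⟩

lemma Matrix.dotProduct_rows_eq_one_apply {n : Type*} [Fintype n] [DecidableEq n]
    {A : Matrix n n ℝ} (hA : A * Aᵀ = 1) (i j : n) : A i ⬝ᵥ A j = (1 : Matrix n n ℝ) i j :=
  congrFun (congrFun hA i) j

def leftMulI : Matrix (Fin 4) (Fin 4) ℝ := !![0, -1, 0, 0; 1, 0, 0, 0; 0, 0, 0, -1; 0, 0, 1, 0]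

def leftMulJ : Matrix (Fin 4) (Fin 4) ℝ := !![0, 0, -1, 0; 0, 0, 0, 1; 1, 0, 0, 0; 0, -1, 0, 0]

def leftMulK : Matrix (Fin 4) (Fin 4) ℝ := !![0, 0, 0, -1; 0, 0, -1, 0; 0, 1, 0, 0; 1, 0, 0, 0]

lemma leftMulI_mul_leftMulK : leftMulI * leftMulK = -leftMulJ := by
  ext i j
  fin_cases i <;> fin_cases j <;> simp [leftMulI, leftMulJ, leftMulK, mul_apply, Fin.sum_univ_four]

lemma leftMulI_mul_leftMulJ : leftMulI * leftMulJ = leftMulK := by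
  ext i j
  fin_cases i <;> fin_cases j <;> simp [leftMulI, leftMulJ, leftMulK, mul_apply, Fin.sum_univ_four]

lemma dotProduct_self_mul_dotProduct_self_eq (r s : Fin 4 → ℝ) :
    (r ⬝ᵥ r) * (s ⬝ᵥ s) = (s ⬝ᵥ r) ^ 2 + (s ⬝ᵥ leftMulI *ᵥ r) ^ 2 + (s ⬝ᵥ leftMulK *ᵥ r) ^ 2
      + (s ⬝ᵥ leftMulJ *ᵥ r) ^ 2 := by
  simp [leftMulI, leftMulJ, leftMulK, dotProduct, mulVec, Fin.sum_univ_four]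
  ring

lemma dotProduct_self_smul_eq (r s : Fin 4 → ℝ) :
    (r ⬝ᵥ r) • s = (s ⬝ᵥ r) • r + (s ⬝ᵥ leftMulI *ᵥ r) • leftMulI *ᵥ r
      + (s ⬝ᵥ leftMulK *ᵥ r) • leftMulK *ᵥ r + (s ⬝ᵥ leftMulJ *ᵥ r) • leftMulJ *ᵥ r := by
  ext i
  simp only [Pi.add_apply, Pi.smul_apply, smul_eq_mul]
  fin_cases i <;> simp [leftMulI, leftMulJ, leftMulK, dotProduct, mulVec, Fin.sum_univ_four] <;> ring

lemma exists_eq_cos_smul_leftMulK_add_sin_smul_leftMulJ {r s : Fin 4 → ℝ} (hr : r ⬝ᵥ r = 1)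
    (hs : s ⬝ᵥ s = 1) (h₀ : s ⬝ᵥ r = 0) (h₁ : s ⬝ᵥ leftMulI *ᵥ r = 0) :
    ∃ ξ : ℝ, s = cos ξ • leftMulK *ᵥ r + sin ξ • leftMulJ *ᵥ r := by
  have hsq := dotProduct_self_mul_dotProduct_self_eq r s
  rw [hr, hs, h₀, h₁] at hsq
  obtain ⟨ξ, hcos, hsin⟩ := Real.exists_cos_eq_and_sin_eq
    (by linarith : (s ⬝ᵥ leftMulK *ᵥ r) ^ 2 + (s ⬝ᵥ leftMulJ *ᵥ r) ^ 2 = 1)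
  have hexp := dotProduct_self_smul_eq r s
  rw [hr, one_smul, h₀, h₁, zero_smul, zero_smul, zero_add, zero_add] at hexp
  exact ⟨ξ, by rw [hexp, hcos, hsin]⟩

lemma leftMulI_mulVec_cos_smul_add_sin_smul (ξ : ℝ) (r : Fin 4 → ℝ) :
    leftMulI *ᵥ (cos ξ • leftMulK *ᵥ r + sin ξ • leftMulJ *ᵥ r)
      = -cos ξ • leftMulJ *ᵥ r + sin ξ • leftMulK *ᵥ r := by
  rw [mulVec_add, mulVec_smul, mulVec_smul, mulVec_mulVec, mulVec_mulVec, leftMulI_mul_leftMulK,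
    leftMulI_mul_leftMulJ, neg_mulVec, smul_neg, neg_smul]

lemma rows_eq_leftMulI_mulVec_of_commute {A : Matrix (Fin 4) (Fin 4) ℝ}
    (h : A * leftMulI = leftMulI * A) : A 1 = leftMulI *ᵥ A 0 ∧ A 3 = leftMulI *ᵥ A 2 := by
  constructor <;> funext j
  · have := congrFun (congrFun h 0) j
    fin_cases j <;> simp [leftMulI, mul_apply, mulVec, dotProduct, Fin.sum_univ_four] at this ⊢ <;>
      linarith
  · have := congrFun (congrFun h 2) j
    fin_cases j <;> simp [leftMulI, mul_apply, mulVec, dotProduct, Fin.sum_univ_four] at this ⊢ <;>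
      linarith

theorem orthogonal_commuting_J1_structure
    (J₁ J₂ J₃ : Matrix (Fin 4) (Fin 4) ℝ)
    (hJ₁ : J₁ = !![0, -1, 0, 0; 1, 0, 0, 0; 0, 0, 0, -1; 0, 0, 1, 0])
    (hJ₂ : J₂ = !![0, 0, 0, -1; 0, 0, -1, 0; 0, 1, 0, 0; 1, 0, 0, 0])
    (hJ₃ : J₃ = !![0, 0, -1, 0; 0, 0, 0, 1; 1, 0, 0, 0; 0, -1, 0, 0])
    (A : Matrix (Fin 4) (Fin 4) ℝ) (hA : Aᵀ * A = 1) (hcomm : A * J₁ = J₁ * A) :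
    ∃ (r : Fin 4 → ℝ) (ξ : ℝ), (∑ i, r i ^ 2 = 1) ∧
      A = Matrix.of ![r, J₁.mulVec r,
        cos ξ • J₂.mulVec r + sin ξ • J₃.mulVec r,
        -cos ξ • J₃.mulVec r + sin ξ • J₂.mulVec r] := by
  obtain rfl : J₁ = leftMulI := hJ₁
  obtain rfl : J₂ = leftMulK := hJ₂
  obtain rfl : J₃ = leftMulJ := hJ₃
  have hrows := dotProduct_rows_eq_one_apply (mul_eq_one_comm.mp hA)
  obtain ⟨h₁, h₃⟩ := rows_eq_leftMulI_mulVec_of_commute hcomm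
  obtain ⟨ξ, h₂⟩ := exists_eq_cos_smul_leftMulK_add_sin_smul_leftMulJ (by simpa using hrows 0 0)
    (by simpa using hrows 2 2) (by simpa using hrows 2 0) (by simpa [h₁] using hrows 2 1)
  refine ⟨A 0, ξ, by simpa [dotProduct, sq] using hrows 0 0, funext fun i => ?_⟩
  fin_cases i
  · rfl
  · exact h₁
  · exact h₂
  · exact h₃.trans (h₂ ▸ leftMulI_mulVec_cos_smul_add_sin_smul ξ (A 0))
end

section
/- If λ = 0 in the Codazzi-derived equation λ² cos θ + 4(ε²−1)cos³θ + 4cos θ = 0 (with T-derivative term vanishing), then cos θ·(1 + (ε²−1)cos²θ) = 0; since 1 + (ε²−1)cos²θ > 0 for all ε > 0 and θ ∈ [0, π/2], it follows that θ = π/2. Hence a minimal helix surface in the Berger sphere has constant angle π/2. -/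
open Real

/-! Since `1 + (ε² - 1) cos² θ = sin² θ + ε² cos² θ` is positive for `ε ≠ 0`, the minimality
equation forces `cos θ = 0`, and on `[0, π/2]` the only zero of the cosine is `π/2`. -/

theorem sin_sq_add_mul_cos_sq_pos {ε : ℝ} (hε : ε ≠ 0) (θ : ℝ) :
    0 < sin θ ^ 2 + ε ^ 2 * cos θ ^ 2 := by
  rcases eq_or_ne (cos θ) 0 with hcos | hcos
  · have hsin : sin θ ^ 2 = 1 := by nlinarith [sin_sq_add_cos_sq θ]
    simp [hsin, hcos]
  · have : 0 < ε ^ 2 * cos θ ^ 2 := by positivity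
    nlinarith [sq_nonneg (sin θ)]

theorem eq_pi_div_two_of_cos_eq_zero {θ : ℝ} (hθ : θ ∈ Set.Icc 0 (π / 2)) (hcos : cos θ = 0) :
    θ = π / 2 :=
  injOn_cos ⟨hθ.1, by linarith [hθ.2, pi_pos]⟩ ⟨by linarith [pi_pos], by linarith [pi_pos]⟩
    (hcos.trans cos_pi_div_two.symm)

theorem minimal_helix_angle (ε θ lam : ℝ) (hε : 0 < ε) (hθ : θ ∈ Set.Icc 0 (π / 2))
    (hlam : lam = 0)
    (heq : lam ^ 2 * cos θ + 4 * (ε ^ 2 - 1) * cos θ ^ 3 + 4 * cos θ = 0) :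
    θ = π / 2 := by
  subst hlam
  have hfactor : 4 * cos θ * (sin θ ^ 2 + ε ^ 2 * cos θ ^ 2) = 0 := by
    linear_combination heq + 4 * cos θ * sin_sq_add_cos_sq θ
  have hcos : cos θ = 0 := by
    simpa [(sin_sq_add_mul_cos_sq_pos hε.ne' θ).ne'] using hfactor
  exact eq_pi_div_two_of_cos_eq_zero hθ hcos
end

section
/- Suppose x, y ∈ ℝ satisfy the linear system α₁·p·x + α₂·q·y = ε⁻¹sin²θ and α₁³·p·x + α₂³·q·y = −I₀, where p = (ε/(2B))α₂, q = (ε/(2B))α₁, I₀ = ε⁻³B sin²θ(sin²θ − 2B), α₁ = (B + ε√B cos θ)/ε, α₂ = (B − ε√B cos θ)/ε, B = 1 + (ε²−1)cos²θ, ε > 0, θ ∈ (0, π/2). Then x·y = 1. Moreover if additionally |x| ≤ 1 and |y| ≤ 1 and x > 0, then x = y = 1. -/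
/-!
Since `α₁ α₂ = B sin² θ / ε²`, the coefficients satisfy `α₁ p = α₂ q = sin² θ / (2ε)`; dividing by
this common value turns the system into `x + y = 2` and `α₁² x + α₂² y = α₁² + α₂²`, whose only
solution is `x = y = 1` because `α₁² ≠ α₂²`.
-/

open Real

theorem eq_one_of_add_eq_two_of_sq_mul_add_eq {K : Type*} [Field K] {a b x y : K}
    (hab : a ^ 2 ≠ b ^ 2) (hsum : x + y = 2) (hsq : a ^ 2 * x + b ^ 2 * y = a ^ 2 + b ^ 2) :
    x = 1 ∧ y = 1 := by
  have hprod : (a ^ 2 - b ^ 2) * (x - 1) = 0 := by linear_combination hsq - b ^ 2 * hsum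
  have hx : x = 1 := by simpa [sub_eq_zero, hab] using hprod
  exact ⟨hx, by linear_combination hsum - hx⟩

section HelixAlpha

variable {K : Type*} [Field K] {B ε s c : K}

theorem add_div_mul_sub_div_of_sq_eq (hs : s ^ 2 = B) :
    (B + ε * s * c) / ε * ((B - ε * s * c) / ε) = B * (B - ε ^ 2 * c ^ 2) / ε ^ 2 := by
  rw [div_mul_div_comm]
  linear_combination (-(ε ^ 2 * c ^ 2) / ε ^ 2) * hs

theorem add_div_sq_add_sub_div_sq_of_sq_eq (hs : s ^ 2 = B) :
    ((B + ε * s * c) / ε) ^ 2 + ((B - ε * s * c) / ε) ^ 2 = 2 * B * (B + ε ^ 2 * c ^ 2) / ε ^ 2 := by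
  rw [div_pow, div_pow, ← add_div]
  linear_combination (2 * ε ^ 2 * c ^ 2 / ε ^ 2) * hs

theorem add_div_sq_sub_sub_div_sq :
    ((B + ε * s * c) / ε) ^ 2 - ((B - ε * s * c) / ε) ^ 2 = 4 * B * s * c / ε := by
  rcases eq_or_ne ε 0 with rfl | hε
  · simp
  · field_simp
    ring

end HelixAlpha

theorem inner_products_equal_one (ε θ B α₁ α₂ p q I₀ x y : ℝ)
    (hε : 0 < ε) (hθ : θ ∈ Set.Ioo 0 (π / 2))
    (hB : B = 1 + (ε ^ 2 - 1) * cos θ ^ 2)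
    (hα₁ : α₁ = (B + ε * Real.sqrt B * cos θ) / ε)
    (hα₂ : α₂ = (B - ε * Real.sqrt B * cos θ) / ε)
    (hp : p = (ε / (2 * B)) * α₂) (hq : q = (ε / (2 * B)) * α₁)
    (hI₀ : I₀ = ε⁻¹ ^ 3 * B * sin θ ^ 2 * (sin θ ^ 2 - 2 * B))
    (h1 : α₁ * p * x + α₂ * q * y = ε⁻¹ * sin θ ^ 2)
    (h2 : α₁ ^ 3 * p * x + α₂ ^ 3 * q * y = -I₀) :
    x * y = 1 ∧ (|x| ≤ 1 → |y| ≤ 1 → 0 < x → x = 1 ∧ y = 1) := by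
  have hsin : 0 < sin θ := sin_pos_of_pos_of_lt_pi hθ.1 (by linarith [hθ.2, pi_pos])
  have hcos : 0 < cos θ := cos_pos_of_mem_Ioo ⟨by linarith [hθ.1, pi_pos], hθ.2⟩
  have hB' : B = sin θ ^ 2 + ε ^ 2 * cos θ ^ 2 := hB.trans (one_add_sq_sub_one_mul_cos_sq ε θ)
  have hBpos : 0 < B := by rw [hB']; positivity
  have hs : √B ^ 2 = B := sq_sqrt hBpos.le
  have hα : α₁ * α₂ = B * sin θ ^ 2 / ε ^ 2 := by
    rw [hα₁, hα₂, add_div_mul_sub_div_of_sq_eq hs, hB']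
    ring
  have hk : α₁ * p = sin θ ^ 2 / (2 * ε) ∧ α₂ * q = sin θ ^ 2 / (2 * ε) := by
    have hpq : α₁ * p = ε / (2 * B) * (α₁ * α₂) ∧ α₂ * q = ε / (2 * B) * (α₁ * α₂) :=
      ⟨by rw [hp]; ring, by rw [hq]; ring⟩
    rw [hpq.1, hpq.2, hα, and_self]
    field_simp
  have hk0 : sin θ ^ 2 / (2 * ε) ≠ 0 := by positivity
  have hsum : x + y = 2 := by
    apply mul_left_cancel₀ hk0
    linear_combination h1 - x * hk.1 - y * hk.2
  have hroots : α₁ ^ 2 + α₂ ^ 2 = 2 * B * (2 * B - sin θ ^ 2) / ε ^ 2 := by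
    rw [hα₁, hα₂, add_div_sq_add_sub_div_sq_of_sq_eq hs]
    linear_combination (-2 * B / ε ^ 2) * hB'
  have hsq : α₁ ^ 2 * x + α₂ ^ 2 * y = α₁ ^ 2 + α₂ ^ 2 := by
    apply mul_left_cancel₀ hk0
    linear_combination
      h2 - (α₁ ^ 2 * x) * hk.1 - (α₂ ^ 2 * y) * hk.2 - hI₀ - sin θ ^ 2 / (2 * ε) * hroots
  have hne : α₁ ^ 2 ≠ α₂ ^ 2 := by
    rw [← sub_ne_zero, hα₁, hα₂, add_div_sq_sub_sub_div_sq]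
    positivity
  obtain ⟨rfl, rfl⟩ := eq_one_of_add_eq_two_of_sq_mul_add_eq hne hsum hsq
  exact ⟨one_mul 1, fun _ _ _ => ⟨rfl, rfl⟩⟩
end
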